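/- Fix an integer m₁ ≥ 1 and integers x_1,…,x_{m₁} ≥ 1. For each h > 0 let Π_h be drawn from the Beta(cπ(h), c(1−π(h))) distribution and, conditionally on Π_h, let Δ_1^h,…,Δ_{m₁}^h be independent with Δ_i^h ~ Binomial(x_i, Π_h). Then for all nonnegative integers k_1,…,k_{m₁} with k_i ≤ x_i for every i and Σ_{i=1}^{m₁} k_i ≥ 1, one has P(Δ_i^h = k_i for all i) = q·h + o(h) as h → 0+, where q = c·(∏_{i=1}^{m₁} C(x_i, k_i))·[Γ(Σ_i k_i)·Γ(Σ_i x_i − Σ_i k_i + c)/Γ(Σ_i x_i + c)]·r(t), which is strictly positive. -/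

import Mathlib

open scoped BigOperators
open Filter Topology Asymptotics

/-- The Beta function `B(a,b) = Γ(a)Γ(b)/Γ(a+b)`. -/
noncomputable def betaFn (a b : ℝ) : ℝ := Real.Gamma a * Real.Gamma b / Real.Gamma (a + b)

/-- The joint pmf of `(Δ_1,…,Δ_m)` where, conditionally on `Π ~ Beta(α,β)`, the `Δ_i` are
independent with `Δ_i ~ Binomial(x_i, Π)`:
`P(Δ = k) = (∏ C(x_i,k_i)) · B(∑k+α, ∑x−∑k+β)/B(α,β)`. -/
noncomputable def mbbPmf (m : ℕ) (x : Fin m → ℕ) (α β : ℝ) (k : Fin m → ℕ) : ℝ :=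
  (∏ i, ((x i).choose (k i) : ℝ)) *
    betaFn ((∑ i, (k i : ℝ)) + α) ((∑ i, (x i : ℝ)) - (∑ i, (k i : ℝ)) + β) / betaFn α β

/-- Expectation of `f(Δ_1,…,Δ_m)` under the above joint distribution. -/
noncomputable def mbbExp (m : ℕ) (x : Fin m → ℕ) (α β : ℝ) (f : (Fin m → ℕ) → ℝ) : ℝ :=
  ∑ k ∈ Fintype.piFinset (fun i => Finset.range (x i + 1)), f k * mbbPmf m x α β k

/-- `π(h) = 1 − exp(−∫_t^{t+h} r(s) ds)`. -/
noncomputable def pih (r : ℝ → ℝ) (t h : ℝ) : ℝ :=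
  1 - Real.exp (-(∫ s in t..(t + h), r s))

/-! With `α = cπ(h)` and `β = c − α`, the identity `Γ(α) = Γ(α + 1)/α` gives `B(α, β) ~ 1/α` as
`α → 0`, while `B(∑k + α, ∑x − ∑k + β) → B(∑k, ∑x − ∑k + c)`. So the pmf is
`α · (∏ C(x_i, k_i)) · B(∑k, ∑x − ∑k + c) + o(α)`, and `α/h → c r(t)` by the fundamental theorem
of calculus. -/

lemma Real.continuousAt_Gamma_of_pos {s : ℝ} (hs : 0 < s) : ContinuousAt Real.Gamma s :=
  (Real.differentiableAt_Gamma fun m ↦ ((neg_nonpos.2 m.cast_nonneg).trans_lt hs).ne').continuousAt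

lemma betaFn_pos {a b : ℝ} (ha : 0 < a) (hb : 0 < b) : 0 < betaFn a b := by
  have := Real.Gamma_pos_of_pos ha
  have := Real.Gamma_pos_of_pos hb
  have := Real.Gamma_pos_of_pos (add_pos ha hb)
  unfold betaFn
  positivity

lemma tendsto_betaFn {a b : ℝ} (ha : 0 < a) (hb : 0 < b) {l : Filter ℝ} {f g : ℝ → ℝ}
    (hf : Tendsto f l (𝓝 a)) (hg : Tendsto g l (𝓝 b)) :
    Tendsto (fun y ↦ betaFn (f y) (g y)) l (𝓝 (betaFn a b)) :=
  (((Real.continuousAt_Gamma_of_pos ha).tendsto.comp hf).mul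
    ((Real.continuousAt_Gamma_of_pos hb).tendsto.comp hg)).div
    ((Real.continuousAt_Gamma_of_pos (add_pos ha hb)).tendsto.comp (hf.add hg))
    (Real.Gamma_pos_of_pos (add_pos ha hb)).ne'

lemma betaFn_div_betaFn_div_self (a b β : ℝ) {α : ℝ} (hα : α ≠ 0) :
    betaFn a b / betaFn α β / α
      = betaFn a b * Real.Gamma (α + β) / (Real.Gamma (α + 1) * Real.Gamma β) := by
  rw [Real.Gamma_add_one hα]
  unfold betaFn
  field_simp

lemma tendsto_betaFn_div_betaFn_div_self {a b c : ℝ} (ha : 0 < a) (hbc : 0 < b + c)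
    (hc : 0 < c) :
    Tendsto (fun α ↦ betaFn (a + α) (b + (c - α)) / betaFn α (c - α) / α) (𝓝[≠] 0)
      (𝓝 (betaFn a (b + c))) := by
  have hα : Tendsto (fun α : ℝ ↦ α) (𝓝[≠] 0) (𝓝 0) := nhdsWithin_le_nhds
  have hcα : Tendsto (fun α : ℝ ↦ c - α) (𝓝[≠] 0) (𝓝 c) := by
    simpa using tendsto_const_nhds.sub hα
  have hlim : Tendsto (fun α ↦ betaFn (a + α) (b + (c - α)) * Real.Gamma (α + (c - α)) /
      (Real.Gamma (α + 1) * Real.Gamma (c - α))) (𝓝[≠] 0)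
      (𝓝 (betaFn a (b + c) * Real.Gamma c / (Real.Gamma (0 + 1) * Real.Gamma c))) := by
    refine ((tendsto_betaFn ha hbc ?_ ?_).mul ?_).div
      (((Real.continuousAt_Gamma_of_pos (by norm_num)).tendsto.comp ?_).mul
        ((Real.continuousAt_Gamma_of_pos hc).tendsto.comp hcα)) ?_
    · simpa using tendsto_const_nhds.add hα
    · exact tendsto_const_nhds.add hcα
    · simp
    · exact hα.add_const 1
    · simp [(Real.Gamma_pos_of_pos hc).ne']
  rw [zero_add, Real.Gamma_one, one_mul, mul_div_cancel_right₀ _ (Real.Gamma_pos_of_pos hc).ne']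
    at hlim
  refine hlim.congr' ?_
  filter_upwards [self_mem_nhdsWithin] with α hα
  rw [betaFn_div_betaFn_div_self _ _ _ hα]

lemma pih_zero (r : ℝ → ℝ) (t : ℝ) : pih r t 0 = 0 := by
  simp [pih]

lemma hasDerivAt_pih {r : ℝ → ℝ} (hr : Continuous r) (t : ℝ) : HasDerivAt (pih r t) (r t) 0 := by
  have hint : HasDerivAt (fun h ↦ ∫ s in t..(t + h), r s) (r t) 0 :=
    HasDerivAt.comp_const_add t 0 (by simpa using (hr.integral_hasStrictDerivAt t t).hasDerivAt)
  exact (hint.neg.exp.const_sub 1).congr_deriv (by simp)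

lemma pih_pos {r : ℝ → ℝ} (hr : Continuous r) (hr_pos : ∀ s, 0 < r s) (t : ℝ) {h : ℝ}
    (hh : 0 < h) : 0 < pih r t h := by
  have : 0 < ∫ s in t..(t + h), r s :=
    intervalIntegral.intervalIntegral_pos_of_pos (hr.intervalIntegrable _ _) hr_pos (by linarith)
  simpa [pih] using this

lemma tendsto_pih_div_self {r : ℝ → ℝ} (hr : Continuous r) (t : ℝ) :
    Tendsto (fun h ↦ pih r t h / h) (𝓝[>] 0) (𝓝 (r t)) := by
  simpa [pih_zero, div_eq_inv_mul] using (hasDerivAt_pih hr t).tendsto_slope_zero_right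

lemma tendsto_pih_nhdsGT {r : ℝ → ℝ} (hr : Continuous r) (hr_pos : ∀ s, 0 < r s) (t : ℝ) :
    Tendsto (pih r t) (𝓝[>] 0) (𝓝[>] 0) := by
  refine tendsto_nhdsWithin_of_tendsto_nhds_of_eventually_within _ ?_ ?_
  · simpa [pih_zero] using ((hasDerivAt_pih hr t).continuousAt.tendsto.mono_left nhdsWithin_le_nhds)
  · filter_upwards [self_mem_nhdsWithin] with h hh using pih_pos hr hr_pos t hh

lemma tendsto_mbbPmf_div_self {m : ℕ} {x k : Fin m → ℕ} {c : ℝ} (hc : 0 < c)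
    (hK : (0 : ℝ) < ∑ i, (k i : ℝ)) (hKX : (∑ i, (k i : ℝ)) ≤ ∑ i, (x i : ℝ)) :
    Tendsto (fun α ↦ mbbPmf m x α (c - α) k / α) (𝓝[≠] 0)
      (𝓝 ((∏ i, ((x i).choose (k i) : ℝ)) *
        betaFn (∑ i, (k i : ℝ)) ((∑ i, (x i : ℝ)) - (∑ i, (k i : ℝ)) + c))) := by
  refine ((tendsto_betaFn_div_betaFn_div_self hK (by linarith) hc).const_mul _).congr fun α ↦ ?_
  simp only [mbbPmf, mul_div_assoc]

lemma isLittleO_sub_mul_of_tendsto_div_self {l : Filter ℝ} {f : ℝ → ℝ} {q : ℝ}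
    (hl : ∀ᶠ h in l, h ≠ 0) (hf : Tendsto (fun h ↦ f h / h) l (𝓝 q)) :
    (fun h ↦ f h - q * h) =o[l] fun h ↦ h := by
  refine (isLittleO_iff_tendsto' (hl.mono fun h hh h0 ↦ absurd h0 hh)).2 ?_
  simpa using (hf.sub_const q).congr' (hl.mono fun h hh ↦ by field_simp)

theorem mbb_transition_rate_general
    (r : ℝ → ℝ) (hr_cont : Continuous r) (hr_pos : ∀ s, 0 < r s)
    (t c : ℝ) (hc : 0 < c) (m₁ : ℕ)
    (x : Fin m₁ → ℕ)
    (k : Fin m₁ → ℕ) (hk : ∀ i, k i ≤ x i) (hksum : 1 ≤ ∑ i, k i) :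
    (fun h : ℝ => mbbPmf m₁ x (c * pih r t h) (c * (1 - pih r t h)) k
        - c * (∏ i, ((x i).choose (k i) : ℝ)) *
            (Real.Gamma (∑ i, (k i : ℝ)) *
                Real.Gamma ((∑ i, (x i : ℝ)) - (∑ i, (k i : ℝ)) + c)
              / Real.Gamma ((∑ i, (x i : ℝ)) + c)) * r t * h)
      =o[𝓝[>] (0 : ℝ)] (fun h => h) ∧
    0 < c * (∏ i, ((x i).choose (k i) : ℝ)) *
          (Real.Gamma (∑ i, (k i : ℝ)) *
              Real.Gamma ((∑ i, (x i : ℝ)) - (∑ i, (k i : ℝ)) + c)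
            / Real.Gamma ((∑ i, (x i : ℝ)) + c)) * r t := by
  have hK : (0 : ℝ) < ∑ i, (k i : ℝ) := by exact_mod_cast hksum
  have hKX : (∑ i, (k i : ℝ)) ≤ ∑ i, (x i : ℝ) := by gcongr with i; exact_mod_cast hk i
  have hP : (0 : ℝ) < ∏ i, ((x i).choose (k i) : ℝ) :=
    Finset.prod_pos fun i _ ↦ by exact_mod_cast Nat.choose_pos (hk i)
  set K : ℝ := ∑ i, (k i : ℝ)
  set X : ℝ := ∑ i, (x i : ℝ)
  set P : ℝ := ∏ i, ((x i).choose (k i) : ℝ)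
  have hB : Real.Gamma K * Real.Gamma (X - K + c) / Real.Gamma (X + c) = betaFn K (X - K + c) := by
    rw [betaFn, ← add_assoc, add_sub_cancel]
  rw [hB]
  have hα : Tendsto (fun h ↦ c * pih r t h) (𝓝[>] 0) (𝓝[≠] 0) := by
    obtain ⟨hlim, hpos⟩ := tendsto_nhdsWithin_iff.1 (tendsto_pih_nhdsGT hr_cont hr_pos t)
    exact tendsto_nhdsWithin_iff.2
      ⟨by simpa using hlim.const_mul c, hpos.mono fun h hh ↦ (mul_pos hc hh).ne'⟩
  have hrate := ((tendsto_mbbPmf_div_self hc hK hKX).comp hα).mul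
    ((tendsto_pih_div_self hr_cont t).const_mul c)
  have hne : ∀ᶠ h in 𝓝[>] (0 : ℝ), h ≠ 0 := eventually_mem_nhdsWithin.mono fun _ hh ↦ ne_of_gt hh
  refine ⟨isLittleO_sub_mul_of_tendsto_div_self hne ?_, ?_⟩
  · rw [show c * P * betaFn K (X - K + c) * r t = P * betaFn K (X - K + c) * (c * r t) by ring]
    refine hrate.congr' ((eventually_mem_nhdsWithin.and hne).mono fun h ⟨hh, hh₀⟩ ↦ ?_)
    have hπ := pih_pos hr_cont hr_pos t hh
    simp only [Function.comp_apply, mul_one_sub]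
    field_simp
  · have := betaFn_pos hK (by linarith : 0 < X - K + c)
    have := hr_pos t
    positivity

/-- with `Π_h ~ Beta(cπ(h), c(1−π(h)))` and, conditionally on `Π_h`,
independent `Δ_i^h ~ Binomial(x_i, Π_h)` for `i = 1,…,m₁`, for all `k_i ≤ x_i` with
`∑ k_i ≥ 1`: `P(Δ_i^h = k_i ∀ i) = q·h + o(h)` as `h → 0+`, where
`q = c·(∏ C(x_i,k_i))·[Γ(∑k)Γ(∑x−∑k+c)/Γ(∑x+c)]·r(t) > 0`. -/
theorem mbb_transition_rate
    (r : ℝ → ℝ) (hr_cont : Continuous r) (hr_pos : ∀ s, 0 < r s)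
    (t c : ℝ) (hc : 0 < c) (m₁ : ℕ) (hm : 1 ≤ m₁)
    (x : Fin m₁ → ℕ) (hx : ∀ i, 1 ≤ x i)
    (k : Fin m₁ → ℕ) (hk : ∀ i, k i ≤ x i) (hksum : 1 ≤ ∑ i, k i) :
    (fun h : ℝ => mbbPmf m₁ x (c * pih r t h) (c * (1 - pih r t h)) k
        - c * (∏ i, ((x i).choose (k i) : ℝ)) *
            (Real.Gamma (∑ i, (k i : ℝ)) *
                Real.Gamma ((∑ i, (x i : ℝ)) - (∑ i, (k i : ℝ)) + c)
              / Real.Gamma ((∑ i, (x i : ℝ)) + c)) * r t * h)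
      =o[𝓝[>] (0 : ℝ)] (fun h => h) ∧
    0 < c * (∏ i, ((x i).choose (k i) : ℝ)) *
          (Real.Gamma (∑ i, (k i : ℝ)) *
              Real.Gamma ((∑ i, (x i : ℝ)) - (∑ i, (k i : ℝ)) + c)
            / Real.Gamma ((∑ i, (x i : ℝ)) + c)) * r t :=
  mbb_transition_rate_general r hr_cont hr_pos t c hc m₁ x k hk hksum
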